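/- δ² = 0 for first-order one-dimensional Lagrangians: let L : ℝ × ℝ → ℝ be smooth, and define the new Lagrangian on two-dimensional paths x : ℝ² → ℝ by (δL)(t₁, t₂) = (∂x/∂t₂)·[(∂₁L)(x, ∂x/∂t₁) − D₁((∂₂L)(x, ∂x/∂t₁))], where D₁ is the total derivative in t₁. Then the variational derivative of δL with respect to x vanishes identically along every smooth map x : ℝ² → ℝ. -/

import Mathlib

noncomputable def p1 (L : ℝ × ℝ → ℝ) (p : ℝ × ℝ) : ℝ := fderiv ℝ L p (1, 0)
noncomputable def p2 (L : ℝ × ℝ → ℝ) (p : ℝ × ℝ) : ℝ := fderiv ℝ L p (0, 1)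

/-- Total derivatives in the two time directions for functions on `ℝ²`. -/
noncomputable def D1 (F : ℝ × ℝ → ℝ) (p : ℝ × ℝ) : ℝ := fderiv ℝ F p (1, 0)
noncomputable def D2 (F : ℝ × ℝ → ℝ) (p : ℝ × ℝ) : ℝ := fderiv ℝ F p (0, 1)

/-- Jet space of second order: coordinates (x, x₁, x₂, x₁₁, x₁₂, x₂₂). -/
abbrev J6 : Type := ℝ × ℝ × ℝ × ℝ × ℝ × ℝ


section helpers
variable {E : Type*} [NormedAddCommGroup E] [NormedSpace ℝ E]

lemma fderiv_pair (φ : ℝ × ℝ →L[ℝ] ℝ) (a b : ℝ) : φ (a, b) = a * φ (1, 0) + b * φ (0, 1) := by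
  have h : (a, b) = a • ((1:ℝ), (0:ℝ)) + b • ((0:ℝ), (1:ℝ)) := by simp [Prod.ext_iff]
  rw [h, map_add, map_smul, map_smul]; simp

lemma contDiff_dapp {F : ℝ × ℝ → ℝ} (hF : ContDiff ℝ (⊤ : ℕ∞) F) (w : ℝ × ℝ) :
    ContDiff ℝ (⊤ : ℕ∞) (fun q => fderiv ℝ F q w) :=
  (hF.fderiv_right (by simp)).clm_apply contDiff_const

lemma mixed_symm {F : ℝ × ℝ → ℝ} (hF : ContDiff ℝ (⊤ : ℕ∞) F) (q v w : ℝ × ℝ) :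
    fderiv ℝ (fun p => fderiv ℝ F p w) q v = fderiv ℝ (fun p => fderiv ℝ F p v) q w := by
  have hd : ContDiff ℝ (⊤ : ℕ∞) (fderiv ℝ F) := hF.fderiv_right (by simp)
  have h1 : ∀ u : ℝ × ℝ, fderiv ℝ (fun p => fderiv ℝ F p u) q = (fderiv ℝ (fderiv ℝ F) q).flip u := by
    intro u
    rw [fderiv_clm_apply (hd.differentiable (by simp) q) (differentiableAt_const u)]
    simp
  rw [h1, h1]
  exact second_derivative_symmetric (f := F)
    (fun y => (hF.differentiable (by simp) y).hasFDerivAt)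
    ((hd.differentiable (by simp) q).hasFDerivAt) v w

lemma fderiv_comp2E {F : ℝ × ℝ → ℝ} (hF : ContDiff ℝ (⊤ : ℕ∞) F) {u v : E → ℝ} {s : E}
    (hu : DifferentiableAt ℝ u s) (hv : DifferentiableAt ℝ v s) (w : E) :
    fderiv ℝ (fun s => F (u s, v s)) s w
      = fderiv ℝ u s w * p1 F (u s, v s) + fderiv ℝ v s w * p2 F (u s, v s) := by
  have h : HasFDerivAt (fun s => F (u s, v s))
      ((fderiv ℝ F (u s, v s)).comp (((fderiv ℝ u s)).prod (fderiv ℝ v s))) s :=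
    HasFDerivAt.comp s ((hF.differentiable (by simp) _).hasFDerivAt) (HasFDerivAt.prodMk hu.hasFDerivAt hv.hasFDerivAt)
  rw [h.fderiv]
  simp only [ContinuousLinearMap.coe_comp', Function.comp_apply, ContinuousLinearMap.prod_apply]
  rw [fderiv_pair (fderiv ℝ F (u _, v _))]
  simp [p1, p2, mul_comm]

lemma fderiv_mulE {f g : E → ℝ} {s : E} (hf : DifferentiableAt ℝ f s)
    (hg : DifferentiableAt ℝ g s) (w : E) :
    fderiv ℝ (fun s => f s * g s) s w = fderiv ℝ f s w * g s + f s * fderiv ℝ g s w := by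
  rw [fderiv_fun_mul hf hg]; simp; ring

lemma fderiv_subE {f g : E → ℝ} {s : E} (hf : DifferentiableAt ℝ f s)
    (hg : DifferentiableAt ℝ g s) (w : E) :
    fderiv ℝ (fun s => f s - g s) s w = fderiv ℝ f s w - fderiv ℝ g s w := by
  rw [fderiv_fun_sub hf hg]; simp

lemma fderiv_addE {f g : E → ℝ} {s : E} (hf : DifferentiableAt ℝ f s)
    (hg : DifferentiableAt ℝ g s) (w : E) :
    fderiv ℝ (fun s => f s + g s) s w = fderiv ℝ f s w + fderiv ℝ g s w := by
  rw [fderiv_fun_add hf hg]; simp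

lemma fderiv_negE {f : E → ℝ} {s : E} (hf : DifferentiableAt ℝ f s) (w : E) :
    fderiv ℝ (fun s => -(f s)) s w = -(fderiv ℝ f s w) := by
  rw [fderiv_fun_neg]; simp

end helpers

section coords

def c1 : J6 →L[ℝ] ℝ := ContinuousLinearMap.fst ℝ ℝ _
def c2 : J6 →L[ℝ] ℝ :=
  (ContinuousLinearMap.fst ℝ ℝ _).comp (ContinuousLinearMap.snd ℝ ℝ _)
def c3 : J6 →L[ℝ] ℝ :=
  (ContinuousLinearMap.fst ℝ ℝ _).comp ((ContinuousLinearMap.snd ℝ ℝ _).comp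
    (ContinuousLinearMap.snd ℝ ℝ _))
def c4 : J6 →L[ℝ] ℝ :=
  (ContinuousLinearMap.fst ℝ ℝ _).comp ((ContinuousLinearMap.snd ℝ ℝ _).comp
    ((ContinuousLinearMap.snd ℝ ℝ _).comp (ContinuousLinearMap.snd ℝ ℝ _)))

lemma hasFD_c1 (p : J6) : HasFDerivAt (fun p : J6 => p.1) c1 p := by
  have h := c1.hasFDerivAt (x := p); exact h
lemma hasFD_c2 (p : J6) : HasFDerivAt (fun p : J6 => p.2.1) c2 p := by
  have h := c2.hasFDerivAt (x := p); exact h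
lemma hasFD_c3 (p : J6) : HasFDerivAt (fun p : J6 => p.2.2.1) c3 p := by
  have h := c3.hasFDerivAt (x := p); exact h
lemma hasFD_c4 (p : J6) : HasFDerivAt (fun p : J6 => p.2.2.2.1) c4 p := by
  have h := c4.hasFDerivAt (x := p); exact h

lemma fd_c1 (p e : J6) : fderiv ℝ (fun p : J6 => p.1) p e = e.1 := by
  rw [(hasFD_c1 p).fderiv]; rfl
lemma fd_c2 (p e : J6) : fderiv ℝ (fun p : J6 => p.2.1) p e = e.2.1 := by
  rw [(hasFD_c2 p).fderiv]; rfl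
lemma fd_c3 (p e : J6) : fderiv ℝ (fun p : J6 => p.2.2.1) p e = e.2.2.1 := by
  rw [(hasFD_c3 p).fderiv]; rfl
lemma fd_c4 (p e : J6) : fderiv ℝ (fun p : J6 => p.2.2.2.1) p e = e.2.2.2.1 := by
  rw [(hasFD_c4 p).fderiv]; rfl

end coords

lemma fderiv_M0 (L : ℝ × ℝ → ℝ) (hL : ContDiff ℝ (⊤ : ℕ∞) L) (p e : J6) :
    fderiv ℝ (fun p : J6 => p.2.2.1 * (p1 L (p.1, p.2.1)
        - (p1 (p2 L) (p.1, p.2.1) * p.2.1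
          + p2 (p2 L) (p.1, p.2.1) * p.2.2.2.1))) p e
    = e.2.2.1 * (p1 L (p.1, p.2.1)
        - (p1 (p2 L) (p.1, p.2.1) * p.2.1 + p2 (p2 L) (p.1, p.2.1) * p.2.2.2.1))
      + p.2.2.1 * ( (e.1 * p1 (p1 L) (p.1, p.2.1) + e.2.1 * p2 (p1 L) (p.1, p.2.1))
        - ( (e.1 * p1 (p1 (p2 L)) (p.1, p.2.1) + e.2.1 * p2 (p1 (p2 L)) (p.1, p.2.1)) * p.2.1
            + p1 (p2 L) (p.1, p.2.1) * e.2.1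
          + ((e.1 * p1 (p2 (p2 L)) (p.1, p.2.1) + e.2.1 * p2 (p2 (p2 L)) (p.1, p.2.1)) * p.2.2.2.1
            + p2 (p2 L) (p.1, p.2.1) * e.2.2.2.1) ) ) := by
  have hG : ContDiff ℝ (⊤ : ℕ∞) (p2 L) := contDiff_dapp hL _
  have hA : ContDiff ℝ (⊤ : ℕ∞) (p1 L) := contDiff_dapp hL _
  have hB : ContDiff ℝ (⊤ : ℕ∞) (p1 (p2 L)) := contDiff_dapp hG _
  have hC : ContDiff ℝ (⊤ : ℕ∞) (p2 (p2 L)) := contDiff_dapp hG _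
  have h1 : DifferentiableAt ℝ (fun p : J6 => p.1) p := (hasFD_c1 p).differentiableAt
  have h2 : DifferentiableAt ℝ (fun p : J6 => p.2.1) p := (hasFD_c2 p).differentiableAt
  have h3 : DifferentiableAt ℝ (fun p : J6 => p.2.2.1) p := (hasFD_c3 p).differentiableAt
  have h4 : DifferentiableAt ℝ (fun p : J6 => p.2.2.2.1) p := (hasFD_c4 p).differentiableAt
  have hπ : DifferentiableAt ℝ (fun p : J6 => ((p.1 : ℝ), (p.2.1 : ℝ))) p := DifferentiableAt.prodMk h1 h2
  have hAc : DifferentiableAt ℝ (fun p : J6 => p1 L (p.1, p.2.1)) p :=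
    DifferentiableAt.comp p ((hA.differentiable (by simp)).differentiableAt) hπ
  have hBc : DifferentiableAt ℝ (fun p : J6 => p1 (p2 L) (p.1, p.2.1)) p :=
    DifferentiableAt.comp p ((hB.differentiable (by simp)).differentiableAt) hπ
  have hCc : DifferentiableAt ℝ (fun p : J6 => p2 (p2 L) (p.1, p.2.1)) p :=
    DifferentiableAt.comp p ((hC.differentiable (by simp)).differentiableAt) hπ
  have hbig : DifferentiableAt ℝ (fun p : J6 => p1 L (p.1, p.2.1)
      - (p1 (p2 L) (p.1, p.2.1) * p.2.1 + p2 (p2 L) (p.1, p.2.1) * p.2.2.2.1)) p :=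
    hAc.fun_sub ((hBc.fun_mul h2).fun_add (hCc.fun_mul h4))
  rw [fderiv_mulE h3 hbig, fderiv_subE hAc ((hBc.fun_mul h2).fun_add (hCc.fun_mul h4)),
    fderiv_addE (hBc.fun_mul h2) (hCc.fun_mul h4), fderiv_mulE hBc h2, fderiv_mulE hCc h4,
    fderiv_comp2E hA h1 h2, fderiv_comp2E hB h1 h2, fderiv_comp2E hC h1 h2,
    fd_c1, fd_c2, fd_c3, fd_c4]

theorem delta_squared_zero
    (L : ℝ × ℝ → ℝ) (hL : ContDiff ℝ (⊤ : ℕ∞) L)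
    (M : J6 → ℝ)
    -- M is the Lagrangian δL: x₂ · (∂₁L(x,x₁) − D₁(∂₂L(x,x₁))), where the total
    -- derivative D₁ is expanded on the jet coordinates.
    (hM : ∀ p : J6, M p =
      p.2.2.1 * (p1 L (p.1, p.2.1)
        - (p1 (fun q => p2 L q) (p.1, p.2.1) * p.2.1
          + p2 (fun q => p2 L q) (p.1, p.2.1) * p.2.2.2.1)))
    (x : ℝ × ℝ → ℝ) (hx : ContDiff ℝ (⊤ : ℕ∞) x) (t : ℝ × ℝ) :
    -- jet prolongation of x
    (fun J : (ℝ × ℝ) → J6 =>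
      fderiv ℝ M (J t) (1,0,0,0,0,0)
        - D1 (fun s => fderiv ℝ M (J s) (0,1,0,0,0,0)) t
        - D2 (fun s => fderiv ℝ M (J s) (0,0,1,0,0,0)) t
        + D1 (D1 (fun s => fderiv ℝ M (J s) (0,0,0,1,0,0))) t
        + D1 (D2 (fun s => fderiv ℝ M (J s) (0,0,0,0,1,0))) t
        + D2 (D2 (fun s => fderiv ℝ M (J s) (0,0,0,0,0,1))) t)
      (fun s => (x s, D1 x s, D2 x s, D1 (D1 x) s, D1 (D2 x) s, D2 (D2 x) s))
      = 0 := by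
  have hMf : M = fun p : J6 => p.2.2.1 * (p1 L (p.1, p.2.1)
        - (p1 (fun q => p2 L q) (p.1, p.2.1) * p.2.1
          + p2 (fun q => p2 L q) (p.1, p.2.1) * p.2.2.2.1)) := funext hM
  subst hMf
  -- smoothness of the various partial derivatives of L
  have hG : ContDiff ℝ (⊤ : ℕ∞) (p2 L) := contDiff_dapp hL _
  have hA : ContDiff ℝ (⊤ : ℕ∞) (p1 L) := contDiff_dapp hL _
  have hB : ContDiff ℝ (⊤ : ℕ∞) (p1 (p2 L)) := contDiff_dapp hG _
  have hC : ContDiff ℝ (⊤ : ℕ∞) (p2 (p2 L)) := contDiff_dapp hG _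
  have hp1C : ContDiff ℝ (⊤ : ℕ∞) (p1 (p2 (p2 L))) := contDiff_dapp hC _
  have hp2C : ContDiff ℝ (⊤ : ℕ∞) (p2 (p2 (p2 L))) := contDiff_dapp hC _
  -- smoothness of derivatives of x
  have hX1 : ContDiff ℝ (⊤ : ℕ∞) (fun r => fderiv ℝ x r (1,0)) := contDiff_dapp hx _
  have hX2 : ContDiff ℝ (⊤ : ℕ∞) (fun r => fderiv ℝ x r (0,1)) := contDiff_dapp hx _
  have hX11 : ContDiff ℝ (⊤ : ℕ∞) (fun r => fderiv ℝ (fun r => fderiv ℝ x r (1,0)) r (1,0)) := contDiff_dapp hX1 _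
  have hX12 : ContDiff ℝ (⊤ : ℕ∞) (fun r => fderiv ℝ (fun r => fderiv ℝ x r (0,1)) r (1,0)) := contDiff_dapp hX2 _
  have dX : ∀ s, DifferentiableAt ℝ x s := fun s => (hx.differentiable (by simp)).differentiableAt
  have dX1 : ∀ s, DifferentiableAt ℝ (fun r => fderiv ℝ x r (1,0)) s := fun s => (hX1.differentiable (by simp)).differentiableAt
  have dX2 : ∀ s, DifferentiableAt ℝ (fun r => fderiv ℝ x r (0,1)) s := fun s => (hX2.differentiable (by simp)).differentiableAt
  have dX11 : ∀ s, DifferentiableAt ℝ (fun r => fderiv ℝ (fun r => fderiv ℝ x r (1,0)) r (1,0)) s := fun s => (hX11.differentiable (by simp)).differentiableAt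
  have dX12 : ∀ s, DifferentiableAt ℝ (fun r => fderiv ℝ (fun r => fderiv ℝ x r (0,1)) r (1,0)) s := fun s => (hX12.differentiable (by simp)).differentiableAt
  have cq : ∀ (F : ℝ × ℝ → ℝ), ContDiff ℝ (⊤ : ℕ∞) F → ∀ s : ℝ × ℝ,
      DifferentiableAt ℝ (fun r => F (x r, fderiv ℝ x r (1,0))) s := fun F hF s => by
    exact (((hF.comp (ContDiff.prodMk hx hX1)).differentiable (by simp)) s)
  -- symmetry of mixed partial derivatives of L
  have sAB : ∀ r : ℝ × ℝ, p2 (p1 L) r = p1 (p2 L) r := fun r => by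
    exact mixed_symm hL r (0,1) (1,0)
  have sBC : ∀ r : ℝ × ℝ, p2 (p1 (p2 L)) r = p1 (p2 (p2 L)) r := fun r => by
    exact mixed_symm hG r (0,1) (1,0)
  have sCC : ∀ r : ℝ × ℝ, p2 (p1 (p2 (p2 L))) r = p1 (p2 (p2 (p2 L))) r := fun r => by
    exact mixed_symm hC r (0,1) (1,0)
  -- symmetry of mixed partials of x
  have sX : ∀ s : ℝ × ℝ, fderiv ℝ (fun r => fderiv ℝ x r (1,0)) s (0,1) = fderiv ℝ (fun r => fderiv ℝ x r (0,1)) s (1,0) := fun s => by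
    exact mixed_symm hx s (0,1) (1,0)
  have sXX : ∀ s : ℝ × ℝ, fderiv ℝ (fun r => fderiv ℝ (fun r => fderiv ℝ x r (1,0)) r (1,0)) s (0,1) = fderiv ℝ (fun r => fderiv ℝ (fun r => fderiv ℝ x r (0,1)) r (1,0)) s (1,0) := fun s => by
    rw [mixed_symm hX1 s (0,1) (1,0), show (fun r => fderiv ℝ (fun r => fderiv ℝ x r (1,0)) r (0,1)) = (fun r => fderiv ℝ (fun r => fderiv ℝ x r (0,1)) r (1,0)) from funext sX]
  show fderiv ℝ (fun p : J6 => p.2.2.1 * (p1 L (p.1, p.2.1) - (p1 (p2 L) (p.1, p.2.1) * p.2.1 + p2 (p2 L) (p.1, p.2.1) * p.2.2.2.1))) (x t, fderiv ℝ x t (1,0), fderiv ℝ x t (0,1), fderiv ℝ (fun r => fderiv ℝ x r (1,0)) t (1,0), fderiv ℝ (fun r => fderiv ℝ x r (0,1)) t (1,0), fderiv ℝ (fun r => fderiv ℝ x r (0,1)) t (0,1)) (1,0,0,0,0,0)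
      - fderiv ℝ (fun s => fderiv ℝ (fun p : J6 => p.2.2.1 * (p1 L (p.1, p.2.1) - (p1 (p2 L) (p.1, p.2.1) * p.2.1 + p2 (p2 L) (p.1, p.2.1) * p.2.2.2.1))) (x s, fderiv ℝ x s (1,0), fderiv ℝ x s (0,1), fderiv ℝ (fun r => fderiv ℝ x r (1,0)) s (1,0), fderiv ℝ (fun r => fderiv ℝ x r (0,1)) s (1,0), fderiv ℝ (fun r => fderiv ℝ x r (0,1)) s (0,1)) (0,1,0,0,0,0)) t (1,0)
      - fderiv ℝ (fun s => fderiv ℝ (fun p : J6 => p.2.2.1 * (p1 L (p.1, p.2.1) - (p1 (p2 L) (p.1, p.2.1) * p.2.1 + p2 (p2 L) (p.1, p.2.1) * p.2.2.2.1))) (x s, fderiv ℝ x s (1,0), fderiv ℝ x s (0,1), fderiv ℝ (fun r => fderiv ℝ x r (1,0)) s (1,0), fderiv ℝ (fun r => fderiv ℝ x r (0,1)) s (1,0), fderiv ℝ (fun r => fderiv ℝ x r (0,1)) s (0,1)) (0,0,1,0,0,0)) t (0,1)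
      + fderiv ℝ (fun s => fderiv ℝ (fun r => fderiv ℝ (fun p : J6 => p.2.2.1 * (p1 L (p.1, p.2.1) - (p1 (p2 L) (p.1, p.2.1) * p.2.1 + p2 (p2 L) (p.1, p.2.1) * p.2.2.2.1))) (x r, fderiv ℝ x r (1,0), fderiv ℝ x r (0,1), fderiv ℝ (fun r => fderiv ℝ x r (1,0)) r (1,0), fderiv ℝ (fun r => fderiv ℝ x r (0,1)) r (1,0), fderiv ℝ (fun r => fderiv ℝ x r (0,1)) r (0,1)) (0,0,0,1,0,0)) s (1,0)) t (1,0)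
      + fderiv ℝ (fun s => fderiv ℝ (fun r => fderiv ℝ (fun p : J6 => p.2.2.1 * (p1 L (p.1, p.2.1) - (p1 (p2 L) (p.1, p.2.1) * p.2.1 + p2 (p2 L) (p.1, p.2.1) * p.2.2.2.1))) (x r, fderiv ℝ x r (1,0), fderiv ℝ x r (0,1), fderiv ℝ (fun r => fderiv ℝ x r (1,0)) r (1,0), fderiv ℝ (fun r => fderiv ℝ x r (0,1)) r (1,0), fderiv ℝ (fun r => fderiv ℝ x r (0,1)) r (0,1)) (0,0,0,0,1,0)) s (0,1)) t (1,0)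
      + fderiv ℝ (fun s => fderiv ℝ (fun r => fderiv ℝ (fun p : J6 => p.2.2.1 * (p1 L (p.1, p.2.1) - (p1 (p2 L) (p.1, p.2.1) * p.2.1 + p2 (p2 L) (p.1, p.2.1) * p.2.2.2.1))) (x r, fderiv ℝ x r (1,0), fderiv ℝ x r (0,1), fderiv ℝ (fun r => fderiv ℝ x r (1,0)) r (1,0), fderiv ℝ (fun r => fderiv ℝ x r (0,1)) r (1,0), fderiv ℝ (fun r => fderiv ℝ x r (0,1)) r (0,1)) (0,0,0,0,0,1)) s (0,1)) t (0,1)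
      = 0
  have h2 : (fun s => fderiv ℝ (fun p : J6 => p.2.2.1 * (p1 L (p.1, p.2.1) - (p1 (p2 L) (p.1, p.2.1) * p.2.1 + p2 (p2 L) (p.1, p.2.1) * p.2.2.2.1))) (x s, fderiv ℝ x s (1,0), fderiv ℝ x s (0,1), fderiv ℝ (fun r => fderiv ℝ x r (1,0)) s (1,0), fderiv ℝ (fun r => fderiv ℝ x r (0,1)) s (1,0), fderiv ℝ (fun r => fderiv ℝ x r (0,1)) s (0,1)) (0,1,0,0,0,0)) = (fun s => -(fderiv ℝ x s (0,1) * (p1 (p2 (p2 L)) (x s, fderiv ℝ x s (1,0)) * fderiv ℝ x s (1,0) + p2 (p2 (p2 L)) (x s, fderiv ℝ x s (1,0)) * fderiv ℝ (fun r => fderiv ℝ x r (1,0)) s (1,0)))) := funext fun s => by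
    rw [fderiv_M0 L hL]
    dsimp only
    rw [sAB, sBC]
    ring
  have h3 : (fun s => fderiv ℝ (fun p : J6 => p.2.2.1 * (p1 L (p.1, p.2.1) - (p1 (p2 L) (p.1, p.2.1) * p.2.1 + p2 (p2 L) (p.1, p.2.1) * p.2.2.2.1))) (x s, fderiv ℝ x s (1,0), fderiv ℝ x s (0,1), fderiv ℝ (fun r => fderiv ℝ x r (1,0)) s (1,0), fderiv ℝ (fun r => fderiv ℝ x r (0,1)) s (1,0), fderiv ℝ (fun r => fderiv ℝ x r (0,1)) s (0,1)) (0,0,1,0,0,0)) = (fun s => p1 L (x s, fderiv ℝ x s (1,0)) - (p1 (p2 L) (x s, fderiv ℝ x s (1,0)) * fderiv ℝ x s (1,0) + p2 (p2 L) (x s, fderiv ℝ x s (1,0)) * fderiv ℝ (fun r => fderiv ℝ x r (1,0)) s (1,0))) := funext fun s => by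
    rw [fderiv_M0 L hL]
    dsimp only
    ring
  have h4 : (fun r => fderiv ℝ (fun p : J6 => p.2.2.1 * (p1 L (p.1, p.2.1) - (p1 (p2 L) (p.1, p.2.1) * p.2.1 + p2 (p2 L) (p.1, p.2.1) * p.2.2.2.1))) (x r, fderiv ℝ x r (1,0), fderiv ℝ x r (0,1), fderiv ℝ (fun r => fderiv ℝ x r (1,0)) r (1,0), fderiv ℝ (fun r => fderiv ℝ x r (0,1)) r (1,0), fderiv ℝ (fun r => fderiv ℝ x r (0,1)) r (0,1)) (0,0,0,1,0,0)) = (fun s => -(fderiv ℝ x s (0,1) * p2 (p2 L) (x s, fderiv ℝ x s (1,0)))) := funext fun s => by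
    rw [fderiv_M0 L hL]
    dsimp only
    ring
  have h5 : (fun r => fderiv ℝ (fun p : J6 => p.2.2.1 * (p1 L (p.1, p.2.1) - (p1 (p2 L) (p.1, p.2.1) * p.2.1 + p2 (p2 L) (p.1, p.2.1) * p.2.2.2.1))) (x r, fderiv ℝ x r (1,0), fderiv ℝ x r (0,1), fderiv ℝ (fun r => fderiv ℝ x r (1,0)) r (1,0), fderiv ℝ (fun r => fderiv ℝ x r (0,1)) r (1,0), fderiv ℝ (fun r => fderiv ℝ x r (0,1)) r (0,1)) (0,0,0,0,1,0)) = (fun s : ℝ × ℝ => (0:ℝ)) := funext fun s => by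
    rw [fderiv_M0 L hL]
    dsimp only
    ring
  have h6 : (fun r => fderiv ℝ (fun p : J6 => p.2.2.1 * (p1 L (p.1, p.2.1) - (p1 (p2 L) (p.1, p.2.1) * p.2.1 + p2 (p2 L) (p.1, p.2.1) * p.2.2.2.1))) (x r, fderiv ℝ x r (1,0), fderiv ℝ x r (0,1), fderiv ℝ (fun r => fderiv ℝ x r (1,0)) r (1,0), fderiv ℝ (fun r => fderiv ℝ x r (0,1)) r (1,0), fderiv ℝ (fun r => fderiv ℝ x r (0,1)) r (0,1)) (0,0,0,0,0,1)) = (fun s : ℝ × ℝ => (0:ℝ)) := funext fun s => by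
    rw [fderiv_M0 L hL]
    dsimp only
    ring
  rw [h2, h3, h4, h5, h6]
  have h4b : (fun s => fderiv ℝ (fun s => -(fderiv ℝ x s (0,1) * p2 (p2 L) (x s, fderiv ℝ x s (1,0)))) s (1,0)) = (fun s => -(fderiv ℝ (fun r => fderiv ℝ x r (0,1)) s (1,0) * p2 (p2 L) (x s, fderiv ℝ x s (1,0)) + fderiv ℝ x s (0,1) * (fderiv ℝ x s (1,0) * p1 (p2 (p2 L)) (x s, fderiv ℝ x s (1,0)) + fderiv ℝ (fun r => fderiv ℝ x r (1,0)) s (1,0) * p2 (p2 (p2 L)) (x s, fderiv ℝ x s (1,0))))) := funext fun s => by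
    rw [fderiv_negE ((dX2 s).fun_mul (cq _ hC s)) (1,0),
        fderiv_mulE (dX2 s) (cq _ hC s) ((1:ℝ),(0:ℝ)),
        fderiv_comp2E hC (dX s) (dX1 s) ((1:ℝ),(0:ℝ))]

  rw [h4b]
  have h50 : (fun s => fderiv ℝ (fun s : ℝ × ℝ => (0:ℝ)) s ((0:ℝ),(1:ℝ))) = (fun s : ℝ × ℝ => (0:ℝ)) := funext fun s => by
    simp
  rw [h50]
  have c0 : ∀ w : ℝ × ℝ, fderiv ℝ (fun s : ℝ × ℝ => (0:ℝ)) t w = 0 := fun w => by simp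
  rw [c0, c0]
  have c1 : fderiv ℝ (fun p : J6 => p.2.2.1 * (p1 L (p.1, p.2.1) - (p1 (p2 L) (p.1, p.2.1) * p.2.1 + p2 (p2 L) (p.1, p.2.1) * p.2.2.2.1))) (x t, fderiv ℝ x t (1,0), fderiv ℝ x t (0,1), fderiv ℝ (fun r => fderiv ℝ x r (1,0)) t (1,0), fderiv ℝ (fun r => fderiv ℝ x r (0,1)) t (1,0), fderiv ℝ (fun r => fderiv ℝ x r (0,1)) t (0,1)) ((1:ℝ),(0:ℝ),(0:ℝ),(0:ℝ),(0:ℝ),(0:ℝ)) = fderiv ℝ x t (0,1) * (p1 (p1 L) (x t, fderiv ℝ x t (1,0)) - (p1 (p1 (p2 L)) (x t, fderiv ℝ x t (1,0)) * fderiv ℝ x t (1,0) + p1 (p2 (p2 L)) (x t, fderiv ℝ x t (1,0)) * fderiv ℝ (fun r => fderiv ℝ x r (1,0)) t (1,0))) := by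
    rw [fderiv_M0 L hL]
    dsimp only
    ring
  have c2 : fderiv ℝ (fun s => -(fderiv ℝ x s (0,1) * (p1 (p2 (p2 L)) (x s, fderiv ℝ x s (1,0)) * fderiv ℝ x s (1,0) + p2 (p2 (p2 L)) (x s, fderiv ℝ x s (1,0)) * fderiv ℝ (fun r => fderiv ℝ x r (1,0)) s (1,0)))) t ((1:ℝ),(0:ℝ)) = -(fderiv ℝ (fun r => fderiv ℝ x r (0,1)) t (1,0) * (p1 (p2 (p2 L)) (x t, fderiv ℝ x t (1,0)) * fderiv ℝ x t (1,0) + p2 (p2 (p2 L)) (x t, fderiv ℝ x t (1,0)) * fderiv ℝ (fun r => fderiv ℝ x r (1,0)) t (1,0)) + fderiv ℝ x t (0,1) * ((fderiv ℝ x t (1,0) * p1 (p1 (p2 (p2 L))) (x t, fderiv ℝ x t (1,0)) + fderiv ℝ (fun r => fderiv ℝ x r (1,0)) t (1,0) * p1 (p2 (p2 (p2 L))) (x t, fderiv ℝ x t (1,0))) * fderiv ℝ x t (1,0) + p1 (p2 (p2 L)) (x t, fderiv ℝ x t (1,0)) * fderiv ℝ (fun r => fderiv ℝ x r (1,0)) t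 (1,0) + (fderiv ℝ x t (1,0) * p1 (p2 (p2 (p2 L))) (x t, fderiv ℝ x t (1,0)) + fderiv ℝ (fun r => fderiv ℝ x r (1,0)) t (1,0) * p2 (p2 (p2 (p2 L))) (x t, fderiv ℝ x t (1,0))) * fderiv ℝ (fun r => fderiv ℝ x r (1,0)) t (1,0) + p2 (p2 (p2 L)) (x t, fderiv ℝ x t (1,0)) * fderiv ℝ (fun r => fderiv ℝ (fun r => fderiv ℝ x r (1,0)) r (1,0)) t (1,0))) := by
    rw [fderiv_negE ((dX2 t).fun_mul (((cq _ hp1C t).fun_mul (dX1 t)).fun_add ((cq _ hp2C t).fun_mul (dX11 t)))) ((1:ℝ),(0:ℝ)),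
        fderiv_mulE (dX2 t) (((cq _ hp1C t).fun_mul (dX1 t)).fun_add ((cq _ hp2C t).fun_mul (dX11 t))) ((1:ℝ),(0:ℝ)),
        fderiv_addE ((cq _ hp1C t).fun_mul (dX1 t)) ((cq _ hp2C t).fun_mul (dX11 t)) ((1:ℝ),(0:ℝ)),
        fderiv_mulE (cq _ hp1C t) (dX1 t) ((1:ℝ),(0:ℝ)),
        fderiv_mulE (cq _ hp2C t) (dX11 t) ((1:ℝ),(0:ℝ)),
        fderiv_comp2E hp1C (dX t) (dX1 t) ((1:ℝ),(0:ℝ)),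
        fderiv_comp2E hp2C (dX t) (dX1 t) ((1:ℝ),(0:ℝ)),
        sCC]
    ring
  have c3 : fderiv ℝ (fun s => p1 L (x s, fderiv ℝ x s (1,0)) - (p1 (p2 L) (x s, fderiv ℝ x s (1,0)) * fderiv ℝ x s (1,0) + p2 (p2 L) (x s, fderiv ℝ x s (1,0)) * fderiv ℝ (fun r => fderiv ℝ x r (1,0)) s (1,0))) t ((0:ℝ),(1:ℝ)) = (fderiv ℝ x t (0,1) * p1 (p1 L) (x t, fderiv ℝ x t (1,0)) + fderiv ℝ (fun r => fderiv ℝ x r (0,1)) t (1,0) * p1 (p2 L) (x t, fderiv ℝ x t (1,0))) - ((fderiv ℝ x t (0,1) * p1 (p1 (p2 L)) (x t, fderiv ℝ x t (1,0)) + fderiv ℝ (fun r => fderiv ℝ x r (0,1)) t (1,0) * p1 (p2 (p2 L)) (x t, fderiv ℝ x t (1,0))) * fderiv ℝ x t (1,0) + p1 (p2 L) (x t, fderiv ℝ x t (1,0)) * fderiv ℝ (fun r => fderiv ℝ x r (0,1)) t (1,0) + ((fderiv ℝ x t (0,1) * p1 (p2 (p2 L)) (x t, fderiv ℝ x t (1,0))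 + fderiv ℝ (fun r => fderiv ℝ x r (0,1)) t (1,0) * p2 (p2 (p2 L)) (x t, fderiv ℝ x t (1,0))) * fderiv ℝ (fun r => fderiv ℝ x r (1,0)) t (1,0) + p2 (p2 L) (x t, fderiv ℝ x t (1,0)) * fderiv ℝ (fun r => fderiv ℝ (fun r => fderiv ℝ x r (0,1)) r (1,0)) t (1,0))) := by
    rw [fderiv_subE (cq _ hA t) (((cq _ hB t).fun_mul (dX1 t)).fun_add ((cq _ hC t).fun_mul (dX11 t))) ((0:ℝ),(1:ℝ)),
        fderiv_addE ((cq _ hB t).fun_mul (dX1 t)) ((cq _ hC t).fun_mul (dX11 t)) ((0:ℝ),(1:ℝ)),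
        fderiv_mulE (cq _ hB t) (dX1 t) ((0:ℝ),(1:ℝ)),
        fderiv_mulE (cq _ hC t) (dX11 t) ((0:ℝ),(1:ℝ)),
        fderiv_comp2E hA (dX t) (dX1 t) ((0:ℝ),(1:ℝ)),
        fderiv_comp2E hB (dX t) (dX1 t) ((0:ℝ),(1:ℝ)),
        fderiv_comp2E hC (dX t) (dX1 t) ((0:ℝ),(1:ℝ)),
        sAB, sBC, sX, sXX]

  have c4 : fderiv ℝ (fun s => -(fderiv ℝ (fun r => fderiv ℝ x r (0,1)) s (1,0) * p2 (p2 L) (x s, fderiv ℝ x s (1,0)) + fderiv ℝ x s (0,1) * (fderiv ℝ x s (1,0) * p1 (p2 (p2 L)) (x s, fderiv ℝ x s (1,0)) + fderiv ℝ (fun r => fderiv ℝ x r (1,0)) s (1,0) * p2 (p2 (p2 L)) (x s, fderiv ℝ x s (1,0))))) t ((1:ℝ),(0:ℝ)) = -(fderiv ℝ (fun r => fderiv ℝ (fun r => fderiv ℝ x r (0,1)) r (1,0)) t (1,0) * p2 (p2 L) (x t, fderiv ℝ x t (1,0)) + fderiv ℝ (fun r => fderiv ℝ x r (0,1)) t (1,0)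 * (fderiv ℝ x t (1,0) * p1 (p2 (p2 L)) (x t, fderiv ℝ x t (1,0)) + fderiv ℝ (fun r => fderiv ℝ x r (1,0)) t (1,0) * p2 (p2 (p2 L)) (x t, fderiv ℝ x t (1,0))) + (fderiv ℝ (fun r => fderiv ℝ x r (0,1)) t (1,0) * (fderiv ℝ x t (1,0) * p1 (p2 (p2 L)) (x t, fderiv ℝ x t (1,0)) + fderiv ℝ (fun r => fderiv ℝ x r (1,0)) t (1,0) * p2 (p2 (p2 L)) (x t, fderiv ℝ x t (1,0))) + fderiv ℝ x t (0,1) * ((fderiv ℝ x t (1,0) * p1 (p1 (p2 (p2 L))) (x t, fderiv ℝ x t (1,0)) + fderiv ℝ (fun r => fderiv ℝ x r (1,0)) t (1,0) * p1 (p2 (p2 (p2 L))) (x t, fderiv ℝ x t (1,0))) * fderiv ℝ x t (1,0) + p1 (p2 (p2 L)) (x t, fderiv ℝ x t (1,0)) * fderiv ℝ (fun r => fderiv ℝ x r (1,0)) t (1,0) + (fderiv ℝ x t (1,0) * p1 (p2 (p2 (p2 L))) (x t, fderiv ℝ x t (1,0)) + fderiv ℝ (fun r => fderiv ℝ x r (1,0))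 t (1,0) * p2 (p2 (p2 (p2 L))) (x t, fderiv ℝ x t (1,0))) * fderiv ℝ (fun r => fderiv ℝ x r (1,0)) t (1,0) + p2 (p2 (p2 L)) (x t, fderiv ℝ x t (1,0)) * fderiv ℝ (fun r => fderiv ℝ (fun r => fderiv ℝ x r (1,0)) r (1,0)) t (1,0)))) := by
    rw [fderiv_negE (((dX12 t).fun_mul (cq _ hC t)).fun_add ((dX2 t).fun_mul (((dX1 t).fun_mul (cq _ hp1C t)).fun_add ((dX11 t).fun_mul (cq _ hp2C t))))) ((1:ℝ),(0:ℝ)),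
        fderiv_addE ((dX12 t).fun_mul (cq _ hC t)) ((dX2 t).fun_mul (((dX1 t).fun_mul (cq _ hp1C t)).fun_add ((dX11 t).fun_mul (cq _ hp2C t)))) ((1:ℝ),(0:ℝ)),
        fderiv_mulE (dX12 t) (cq _ hC t) ((1:ℝ),(0:ℝ)),
        fderiv_mulE (dX2 t) (((dX1 t).fun_mul (cq _ hp1C t)).fun_add ((dX11 t).fun_mul (cq _ hp2C t))) ((1:ℝ),(0:ℝ)),
        fderiv_addE ((dX1 t).fun_mul (cq _ hp1C t)) ((dX11 t).fun_mul (cq _ hp2C t)) ((1:ℝ),(0:ℝ)),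
        fderiv_mulE (dX1 t) (cq _ hp1C t) ((1:ℝ),(0:ℝ)),
        fderiv_mulE (dX11 t) (cq _ hp2C t) ((1:ℝ),(0:ℝ)),
        fderiv_comp2E hC (dX t) (dX1 t) ((1:ℝ),(0:ℝ)),
        fderiv_comp2E hp1C (dX t) (dX1 t) ((1:ℝ),(0:ℝ)),
        fderiv_comp2E hp2C (dX t) (dX1 t) ((1:ℝ),(0:ℝ)),
        sCC]
    ring
  rw [c1, c2, c3, c4]
  ring
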